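/- arXiv:0901.2866 — 3 statements merged into one kernel-verified Lean document; each statement's English description precedes it below -/
import Mathlib

section
/- For every nonzero complex number z with z + z̄ ≠ 0, Σ_{n,m≥0} zⁿ(−z̄)^m/(n+m)! = (z·e^z + z̄·e^{−z̄})/(z + z̄). -/
/-! Summing the double series along the antidiagonals `n + m = k` turns the inner sums into
geometric sums: with `w = -z̄`, `∑_{n+m=k} zⁿwᵐ / k! = (z·zᵏ/k! - w·wᵏ/k!) / (z - w)`, and summing
over `k` gives `(z eᶻ - w eʷ) / (z - w)`. Absolute convergence, from `n! m! ≤ (n+m)!`, justifies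
the regrouping. -/

open Finset Complex
open scoped Nat

theorem HasSum.sum_antidiagonal {A α : Type*} [AddCommMonoid A] [HasAntidiagonal A]
    [AddCommMonoid α] [TopologicalSpace α] [ContinuousAdd α] [RegularSpace α]
    {f : A × A → α} {a : α} (hf : HasSum f a) : HasSum (fun n ↦ ∑ p ∈ antidiagonal n, f p) a :=
  (HasAntidiagonal.sigmaAntidiagonalEquivProd.hasSum_iff.mpr hf).sigma fun n ↦
    (antidiagonal n).hasSum f

theorem sum_antidiagonal_pow_mul_pow_mul_sub {R : Type*} [CommRing R] (x y : R) (n : ℕ) :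
    (∑ p ∈ antidiagonal n, x ^ p.1 * y ^ p.2) * (x - y) = x ^ (n + 1) - y ^ (n + 1) := by
  rw [Nat.sum_antidiagonal_eq_sum_range_succ_mk, ← (Commute.all x y).geom_sum₂_mul]
  refine congrArg (· * _) (sum_congr rfl fun i _ ↦ ?_)
  congr 2

theorem summable_pow_mul_pow_div_factorial_add (z w : ℂ) :
    Summable fun p : ℕ × ℕ ↦ z ^ p.1 * w ^ p.2 / (p.1 + p.2)! := by
  have hprod : Summable fun p : ℕ × ℕ ↦ ‖z‖ ^ p.1 / p.1 ! * (‖w‖ ^ p.2 / p.2 !) :=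
    (Real.summable_pow_div_factorial _).mul_of_nonneg (Real.summable_pow_div_factorial _)
      (fun _ ↦ by positivity) fun _ ↦ by positivity
  refine Summable.of_norm (hprod.of_nonneg_of_le (fun _ ↦ norm_nonneg _) fun p ↦ ?_)
  have hfac : (p.1 ! * p.2 ! : ℝ) ≤ (p.1 + p.2)! := by
    exact_mod_cast Nat.le_of_dvd (Nat.factorial_pos _)
      (Nat.factorial_mul_factorial_dvd_factorial_add _ _)
  rw [norm_div, norm_mul, norm_pow, norm_pow, Complex.norm_natCast, div_mul_div_comm]
  gcongr

theorem hasSum_pow_mul_pow_div_factorial_add {z w : ℂ} (h : z ≠ w) :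
    HasSum (fun p : ℕ × ℕ ↦ z ^ p.1 * w ^ p.2 / (p.1 + p.2)!)
      ((z * exp z - w * exp w) / (z - w)) := by
  have hexp : HasSum (fun n : ℕ ↦ (z * (z ^ n / n !) - w * (w ^ n / n !)) / (z - w))
      ((z * exp z - w * exp w) / (z - w)) := by
    simp only [exp_eq_exp_ℂ]
    exact ((NormedSpace.expSeries_div_hasSum_exp z).mul_left z |>.sub
      ((NormedSpace.expSeries_div_hasSum_exp w).mul_left w)).div_const _
  have hdiag (n : ℕ) : ∑ p ∈ antidiagonal n, z ^ p.1 * w ^ p.2 / (p.1 + p.2)! =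
      (z * (z ^ n / n !) - w * (w ^ n / n !)) / (z - w) := by
    rw [sum_congr rfl fun p hp ↦ by rw [mem_antidiagonal.mp hp], ← sum_div,
      eq_div_iff (sub_ne_zero.mpr h), div_mul_eq_mul_div, sum_antidiagonal_pow_mul_pow_mul_sub]
    ring
  have hsum := (summable_pow_mul_pow_div_factorial_add z w).hasSum
  convert hsum
  exact hexp.unique (by simpa only [hdiag] using hsum.sum_antidiagonal)

open Complex in
theorem double_series_exp_eval_general (z : ℂ) (hzz : z + starRingEnd ℂ z ≠ 0) :
    HasSum (fun p : ℕ × ℕ =>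
        z ^ p.1 * (-(starRingEnd ℂ z)) ^ p.2 / (p.1 + p.2).factorial)
      ((z * Complex.exp z + starRingEnd ℂ z * Complex.exp (-(starRingEnd ℂ z))) /
        (z + starRingEnd ℂ z)) := by
  have h : z ≠ -(starRingEnd ℂ z) := by rwa [ne_eq, eq_neg_iff_add_eq_zero]
  simpa only [sub_neg_eq_add, neg_mul] using hasSum_pow_mul_pow_div_factorial_add h

open Complex in
/-- `Σ_{n,m≥0} zⁿ(-z̄)^m/(n+m)! = (z e^z + z̄ e^{-z̄})/(z + z̄)` for `z ≠ 0`, `z + z̄ ≠ 0`. -/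
theorem double_series_exp_eval (z : ℂ) (hz : z ≠ 0) (hzz : z + starRingEnd ℂ z ≠ 0) :
    HasSum (fun p : ℕ × ℕ =>
        z ^ p.1 * (-(starRingEnd ℂ z)) ^ p.2 / (p.1 + p.2).factorial)
      ((z * Complex.exp z + starRingEnd ℂ z * Complex.exp (-(starRingEnd ℂ z))) /
        (z + starRingEnd ℂ z)) :=
  double_series_exp_eval_general z hzz
end

section
/- For every natural number n and real x, the Hermite polynomial admits the integral representation H_n(x) = (−2i)^n · ∫_{−∞}^{∞} e^{−(t−ix)²} tⁿ dt / √π. -/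
/-- Physicists' Hermite polynomials, `H_n(x) = (-1)^n e^{x²} (d/dx)^n e^{-x²}`. -/
noncomputable def physHermite (n : ℕ) (x : ℝ) : ℝ :=
  (-1) ^ n * Real.exp (x ^ 2) * iteratedDeriv n (fun y : ℝ => Real.exp (-y ^ 2)) x

/-!
Completing the square, `e^{-(t-ix)²} = e^{x²} e^{2ixt} e^{-t²}`, so the integral is `e^{x²}` times
the `n`-th moment of `e^{-t²}` against the character `e^{2ixt}`. Differentiating the Gaussian
integral `∫ e^{2iyt} e^{-t²} dt = √π e^{-y²}` `n` times in `y` under the integral sign brings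
down `(2it)ⁿ`, which gives `(2i)ⁿ ∫ e^{2ixt} tⁿ e^{-t²} dt = √π (d/dx)ⁿ e^{-x²}`.
-/

open Real MeasureTheory Complex
open scoped FourierTransform

theorem iteratedDeriv_integral_cexp_mul_smul {E : Type*} [NormedAddCommGroup E]
    [NormedSpace ℂ E] {f : ℝ → E} {n : ℕ} (hf : ∀ k ≤ n, Integrable fun t : ℝ ↦ t ^ k • f t)
    (c y : ℝ) :
    iteratedDeriv n (fun y : ℝ ↦ ∫ t : ℝ, cexp (c * y * t * I) • f t) y =
      ∫ t : ℝ, (c * t * I) ^ n • cexp (c * y * t * I) • f t := by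
  have hf' : ∀ k : ℕ, k ≤ (n : ℕ∞) → Integrable fun t : ℝ ↦ t ^ k • f t :=
    fun k hk ↦ hf k (mod_cast hk)
  have hfourier : (fun y : ℝ ↦ ∫ t : ℝ, cexp (c * y * t * I) • f t) =
      fun y ↦ 𝓕 f (-(c / (2 * π)) * y) := by
    ext y
    rw [fourier_real_eq_integral_exp_smul]
    congr with t
    congr 3
    field_simp
    push_cast
    ring
  have hsmooth : ContDiff ℝ n (𝓕 f) := Real.contDiff_fourier fun k hk ↦ by
    simpa [norm_smul] using (hf' k hk).norm
  rw [hfourier, iteratedDeriv_comp_const_smul hsmooth, Real.iteratedDeriv_fourier hf' le_rfl]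
  dsimp only
  rw [fourier_real_eq_integral_exp_smul, ← integral_smul]
  congr with t
  have harg : ((-2 * π * t * (-(c / (2 * π)) * y) : ℝ) : ℂ) * I = c * y * t * I := by
    push_cast; field_simp
  rw [harg, ← Complex.coe_smul, smul_smul, smul_smul, smul_smul]
  congr 1
  push_cast
  rw [mul_right_comm, ← mul_pow]
  congr 2
  field_simp

theorem iteratedDeriv_ofReal_comp {f : ℝ → ℝ} {n : ℕ} (hf : ContDiff ℝ n f) (x : ℝ) :
    iteratedDeriv n (fun y ↦ (f y : ℂ)) x = iteratedDeriv n f x := by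
  simp only [iteratedDeriv]
  rw [show (fun y ↦ (f y : ℂ)) = ofRealCLM ∘ f from rfl,
    ofRealCLM.iteratedFDeriv_comp_left hf.contDiffAt le_rfl]
  rfl

theorem integrable_pow_smul_cexp_neg_sq (k : ℕ) :
    Integrable fun t : ℝ ↦ t ^ k • cexp (-(t : ℂ) ^ 2) := by
  have h := integrable_rpow_mul_exp_neg_mul_sq one_pos (neg_one_lt_zero.trans_le k.cast_nonneg)
  refine h.ofReal.congr (ae_of_all _ fun t ↦ ?_)
  simp [rpow_natCast, Complex.ofReal_exp]

theorem integral_cexp_two_mul_mul_cexp_neg_sq (y : ℝ) :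
    ∫ t : ℝ, cexp (2 * y * t * I) * cexp (-(t : ℂ) ^ 2) = √π * (rexp (-y ^ 2) : ℂ) := by
  have h := fourierIntegral_gaussian (b := 1) (by simp) (2 * y)
  have hsqrt : (π / 1 : ℂ) ^ (1 / 2 : ℂ) = √π := by
    rw [div_one, sqrt_eq_rpow, ofReal_cpow pi_pos.le]
    norm_num
  rw [hsqrt] at h
  simp only [ofReal_exp]
  convert h using 3 with t
  · ring_nf
  · push_cast
    ring

theorem exp_neg_sub_mul_I_sq (t x : ℂ) :
    cexp (-(t - I * x) ^ 2) = cexp (x ^ 2) * (cexp (2 * x * t * I) * cexp (-t ^ 2)) := by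
  rw [← Complex.exp_add, ← Complex.exp_add]
  ring_nf
  rw [I_sq]
  ring_nf

open Real in
/-- Integral representation `H_n(x) = (-2i)ⁿ π^{-1/2} ∫_ℝ e^{-(t-ix)²} tⁿ dt`. -/
theorem physHermite_integral_repr (n : ℕ) (x : ℝ) :
    (physHermite n x : ℂ) =
      (-2 * Complex.I) ^ n *
        (∫ t : ℝ, Complex.exp (-((t : ℂ) - Complex.I * x) ^ 2) * (t : ℂ) ^ n) /
        (Real.sqrt π : ℝ) := by
  have hmoments := iteratedDeriv_integral_cexp_mul_smul (n := n)
    (fun k _ ↦ integrable_pow_smul_cexp_neg_sq k) 2 x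
  simp only [ofReal_ofNat, smul_eq_mul, integral_cexp_two_mul_mul_cexp_neg_sq,
    iteratedDeriv_const_mul_field] at hmoments
  have hsquare : (2 * I) ^ n * ∫ t : ℝ, cexp (-((t : ℂ) - I * x) ^ 2) * (t : ℂ) ^ n =
      cexp (x ^ 2) * ∫ t : ℝ, (2 * t * I) ^ n * (cexp (2 * x * t * I) * cexp (-(t : ℂ) ^ 2)) := by
    rw [← integral_const_mul, ← integral_const_mul]
    congr with t
    rw [exp_neg_sub_mul_I_sq]
    ring
  have hsqrt : (√π : ℂ) ≠ 0 := ofReal_ne_zero.mpr (sqrt_pos.mpr pi_pos).ne'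
  have hgauss : ContDiff ℝ n fun y : ℝ ↦ rexp (-y ^ 2) :=
    Real.contDiff_exp.comp (contDiff_id.pow 2).neg
  rw [physHermite, eq_div_iff hsqrt, neg_mul (2 : ℂ), neg_pow (2 * I), mul_assoc _ _ (∫ _, _),
    hsquare, ← hmoments, iteratedDeriv_ofReal_comp hgauss]
  push_cast
  ring
end

section
/- The reordering identity for double series: for complex z, w, t with |t| = 1 and an absolutely summable sequence (a_j), Σ_{n=0}^∞ Σ_{k=0}^∞ a_{n+2k}(z^{n+k}w^k tⁿ + z^k w^{n+k} t^{−n} − δ_{n0} z^k w^k) = Σ_{h=0}^∞ Σ_{k=0}^∞ a_{h+k}(tz)^h(t^{−1}w)^k. -/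
/-!
Put `f (h, k) = a (h + k) (t z)^h (t⁻¹ w)^k`; as `|t| = 1` it is absolutely summable. Split
`ℕ × ℕ` along the diagonal: the points `(n + k, k)` give `a (n + 2k) z^(n+k) w^k tⁿ`, and the
points `(k, n + k)` with `n ≥ 1` give `a (n + 2k) z^k w^(n+k) t^(-n)`. On the left the second
family also runs over `n = 0`, which the Kronecker delta cancels.
-/

open Function

theorem injective_fst_add_snd_snd : Injective fun p : ℕ × ℕ => (p.1 + p.2, p.2) := by
  rintro ⟨n, k⟩ ⟨m, l⟩ h
  simp only [Prod.mk.injEq] at h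
  ext <;> omega

theorem injective_snd_fst_add_one_add_snd : Injective fun p : ℕ × ℕ => (p.2, p.1 + 1 + p.2) := by
  rintro ⟨n, k⟩ ⟨m, l⟩ h
  simp only [Prod.mk.injEq] at h
  ext <;> omega

theorem range_fst_add_snd_snd :
    Set.range (fun p : ℕ × ℕ => (p.1 + p.2, p.2)) = {p | p.2 ≤ p.1} := by
  ext ⟨i, j⟩
  simp only [Set.mem_range, Set.mem_ofPred_eq, Prod.mk.injEq, Prod.exists]
  exact ⟨fun ⟨n, k, hi, hj⟩ => by omega, fun hji => ⟨i - j, j, by omega, rfl⟩⟩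

theorem range_snd_fst_add_one_add_snd :
    Set.range (fun p : ℕ × ℕ => (p.2, p.1 + 1 + p.2)) = {p | p.2 ≤ p.1}ᶜ := by
  ext ⟨i, j⟩
  simp only [Set.mem_range, Set.mem_compl_iff, Set.mem_ofPred_eq, Prod.mk.injEq, Prod.exists]
  exact ⟨fun ⟨n, k, hi, hj⟩ => by omega, fun hij => ⟨j - i - 1, i, rfl, by omega⟩⟩

section HasSum

variable {M : Type*} [AddCommMonoid M] [TopologicalSpace M]

theorem HasSum.prod_nat_lower_add_upper [ContinuousAdd M] {f : ℕ × ℕ → M} {a b : M}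
    (ha : HasSum (fun p : ℕ × ℕ => f (p.1 + p.2, p.2)) a)
    (hb : HasSum (fun p : ℕ × ℕ => f (p.2, p.1 + 1 + p.2)) b) : HasSum f (a + b) := by
  refine (injective_fst_add_snd_snd.hasSum_range_iff.2 ha).add_isCompl ?_
    (injective_snd_fst_add_one_add_snd.hasSum_range_iff.2 hb)
  rw [range_fst_add_snd_snd, range_snd_fst_add_one_add_snd]
  exact isCompl_compl

theorem hasSum_prod_nat_succ_fst_iff {g : ℕ × ℕ → M} {b : M} (hg : ∀ k, g (0, k) = 0) :
    HasSum (fun p : ℕ × ℕ => g (p.1 + 1, p.2)) b ↔ HasSum g b := by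
  refine Injective.hasSum_iff (g := fun p : ℕ × ℕ => (p.1 + 1, p.2)) ?_ ?_
  · rintro ⟨n, k⟩ ⟨m, l⟩ h
    simp only [Prod.mk.injEq] at h
    ext <;> omega
  · rintro ⟨n, k⟩ hnk
    cases n with
    | zero => exact hg k
    | succ n => exact absurd ⟨(n, k), rfl⟩ hnk

end HasSum

theorem mul_pow_add_mul_inv_pow {G : Type*} [CommGroupWithZero G] {t : G} (ht : t ≠ 0)
    (x y : G) (n k : ℕ) : (t * x) ^ (n + k) * (t⁻¹ * y) ^ k = x ^ (n + k) * y ^ k * t ^ n := by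
  rw [mul_pow, mul_pow, inv_pow, pow_add t]
  field_simp

theorem mul_pow_mul_inv_pow_add {G : Type*} [CommGroupWithZero G] {t : G} (ht : t ≠ 0)
    (x y : G) (n k : ℕ) : (t * x) ^ k * (t⁻¹ * y) ^ (n + k) = x ^ k * y ^ (n + k) * t⁻¹ ^ n := by
  rw [mul_pow, mul_pow, inv_pow, inv_pow, pow_add t]
  field_simp

theorem reordered_term_eq {K : Type*} [Field K] (a : ℕ → K) (z w : K) {t : K} (ht : t ≠ 0)
    (n k : ℕ) :
    a (n + 2 * k) *
        (z ^ (n + k) * w ^ k * t ^ n + z ^ k * w ^ (n + k) * t⁻¹ ^ n -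
          (if n = 0 then 1 else 0) * z ^ k * w ^ k) =
      a (n + k + k) * (t * z) ^ (n + k) * (t⁻¹ * w) ^ k +
        if n = 0 then 0 else a (k + (n + k)) * (t * z) ^ k * (t⁻¹ * w) ^ (n + k) := by
  rw [mul_assoc _ ((t * z) ^ _), mul_pow_add_mul_inv_pow ht, mul_assoc _ ((t * z) ^ _),
    mul_pow_mul_inv_pow_add ht, show n + k + k = n + 2 * k by ring,
    show k + (n + k) = n + 2 * k by ring]
  rcases n with _ | n
  · simp
  · rw [if_neg n.succ_ne_zero, if_neg n.succ_ne_zero]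
    ring

theorem double_series_reordering_general (a : ℕ → ℂ) (z w t : ℂ) (ht : ‖t‖ = 1)
    (hsum' : Summable fun p : ℕ × ℕ => ‖a (p.1 + p.2)‖ * ‖z‖ ^ p.1 * ‖w‖ ^ p.2) :
    ∑' p : ℕ × ℕ,
        a (p.1 + 2 * p.2) *
          (z ^ (p.1 + p.2) * w ^ p.2 * t ^ p.1 + z ^ p.2 * w ^ (p.1 + p.2) * t⁻¹ ^ p.1 -
            (if p.1 = 0 then 1 else 0) * z ^ p.2 * w ^ p.2) =
      ∑' p : ℕ × ℕ, a (p.1 + p.2) * (t * z) ^ p.1 * (t⁻¹ * w) ^ p.2 := by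
  have ht0 : t ≠ 0 := norm_ne_zero_iff.mp (by rw [ht]; exact one_ne_zero)
  set f : ℕ × ℕ → ℂ := fun p => a (p.1 + p.2) * (t * z) ^ p.1 * (t⁻¹ * w) ^ p.2
  have hf : Summable f := .of_norm (by simpa [f, ht] using hsum')
  have hlower := (hf.comp_injective injective_fst_add_snd_snd).hasSum
  have hupper := (hf.comp_injective injective_snd_fst_add_one_add_snd).hasSum
  have hupper_padded :=
    (hasSum_prod_nat_succ_fst_iff (g := fun p => if p.1 = 0 then 0 else f (p.2, p.1 + p.2))
      fun _ => if_pos rfl).1 <|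
      hupper.congr_fun fun p => if_neg p.1.succ_ne_zero
  rw [hf.hasSum.unique (hlower.prod_nat_lower_add_upper hupper)]
  exact ((hlower.add hupper_padded).congr_fun fun p => reordered_term_eq a z w ht0 p.1 p.2).tsum_eq

/-- Reordering identity for double series: for an absolutely summable family and
`|t| = 1`, `Σ_{n,k} a_{n+2k}(z^{n+k}w^k tⁿ + z^k w^{n+k} t^{-n} - δ_{n0} z^k w^k)
  = Σ_{h,k} a_{h+k}(tz)^h(t⁻¹w)^k`. -/
theorem double_series_reordering (a : ℕ → ℂ) (z w t : ℂ) (ht : ‖t‖ = 1)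
    (hsum : Summable fun p : ℕ × ℕ =>
      ‖a (p.1 + 2 * p.2)‖ * ‖z‖ ^ (p.1 + p.2) * ‖w‖ ^ p.2)
    (hsum' : Summable fun p : ℕ × ℕ => ‖a (p.1 + p.2)‖ * ‖z‖ ^ p.1 * ‖w‖ ^ p.2) :
    ∑' p : ℕ × ℕ,
        a (p.1 + 2 * p.2) *
          (z ^ (p.1 + p.2) * w ^ p.2 * t ^ p.1 + z ^ p.2 * w ^ (p.1 + p.2) * t⁻¹ ^ p.1 -
            (if p.1 = 0 then 1 else 0) * z ^ p.2 * w ^ p.2) =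
      ∑' p : ℕ × ℕ, a (p.1 + p.2) * (t * z) ^ p.1 * (t⁻¹ * w) ^ p.2 :=
  double_series_reordering_general a z w t ht hsum'
end
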